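/- arXiv:0810.4188 — 4 statements merged into one kernel-verified Lean document; each statement's English description precedes it below -/
import Mathlib

section
/- For a random variable Z taking finitely many real values, and λ ≥ 0, ln P(Z ≥ E[Z_{λZ}] − √(2 Var[Z_{λZ}])) ≥ ln E[e^{λZ}] − λ E[Z_{λZ}] − ln 2 − λ √(2 Var[Z_{λZ}]). -/
/-- Moment generating function of a finitely supported random variable with
values `z i` and probabilities `p i`. -/
noncomputable def mgf' (n : ℕ) (p z : Fin n → ℝ) (l : ℝ) : ℝ :=
  ∑ j, p j * Real.exp (l * z j)

/-- Mean of `Z` under the exponentially tilted measure with density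
proportional to `exp (l * Z)`. -/
noncomputable def tiltMean (n : ℕ) (p z : Fin n → ℝ) (l : ℝ) : ℝ :=
  (∑ j, p j * Real.exp (l * z j) * z j) / mgf' n p z l

/-- Variance of `Z` under the exponentially tilted measure. -/
noncomputable def tiltVar (n : ℕ) (p z : Fin n → ℝ) (l : ℝ) : ℝ :=
  (∑ j, p j * Real.exp (l * z j) * (z j - tiltMean n p z l) ^ 2) / mgf' n p z l

/-
Under the tilted measure, Chebyshev's inequality puts at least half of the tilted mass
`mgf' λ` on the window `|Z - μ| ≤ t`, where `μ` and `t² = 2 Var` are the tilted mean and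
twice the tilted variance. On that window `Z ≤ μ + t`, so the density `e^{λZ}` of the tilted
measure with respect to `P` is at most `e^{λ(μ + t)}`, hence
`P(Z ≥ μ - t) ≥ P(|Z - μ| ≤ t) ≥ e^{-λ(μ + t)} mgf' λ / 2`.
-/

open Finset

section WeightedChebyshev

variable {ι : Type*} [Fintype ι] {w x : ι → ℝ}

theorem sum_filter_lt_abs_sub_mul_sq_le (hw : ∀ i, 0 ≤ w i) (c : ℝ) {t : ℝ} (ht : 0 ≤ t) :
    (∑ i ∈ univ.filter (fun i => t < |x i - c|), w i) * t ^ 2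
      ≤ ∑ i, w i * (x i - c) ^ 2 := by
  rw [sum_mul]
  calc ∑ i ∈ univ.filter (fun i => t < |x i - c|), w i * t ^ 2
      ≤ ∑ i ∈ univ.filter (fun i => t < |x i - c|), w i * (x i - c) ^ 2 := by
        refine sum_le_sum fun i hi => mul_le_mul_of_nonneg_left ?_ (hw i)
        rw [← sq_abs (x i - c)]
        exact pow_le_pow_left₀ ht (mem_filter.mp hi).2.le 2
    _ ≤ ∑ i, w i * (x i - c) ^ 2 :=
        sum_le_sum_of_subset_of_nonneg (filter_subset _ _)
          fun i _ _ => mul_nonneg (hw i) (sq_nonneg _)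

theorem sum_filter_abs_sub_pos_eq_zero_of_sum_mul_sq_eq_zero (hw : ∀ i, 0 ≤ w i) {c : ℝ}
    (hV : ∑ i, w i * (x i - c) ^ 2 = 0) :
    ∑ i ∈ univ.filter (fun i => 0 < |x i - c|), w i = 0 := by
  have hterm := (sum_eq_zero_iff_of_nonneg fun i _ => mul_nonneg (hw i) (sq_nonneg _)).mp hV
  refine sum_eq_zero fun i hi => ?_
  have hne : x i - c ≠ 0 := abs_pos.mp (mem_filter.mp hi).2
  simpa [hne] using hterm i (mem_univ i)

theorem sum_div_two_le_sum_filter_abs_sub_le (hw : ∀ i, 0 ≤ w i) (hW : 0 < ∑ i, w i)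
    (c : ℝ) :
    (∑ i, w i) / 2 ≤ ∑ i ∈ univ.filter
      (fun i => |x i - c| ≤ √(2 * ((∑ i, w i * (x i - c) ^ 2) / ∑ i, w i))), w i := by
  set W := ∑ i, w i
  set V := ∑ i, w i * (x i - c) ^ 2
  set t := √(2 * (V / W))
  have hV : 0 ≤ V := sum_nonneg fun i _ => mul_nonneg (hw i) (sq_nonneg _)
  have hsplit := sum_filter_add_sum_filter_not univ (fun i => |x i - c| ≤ t) w
  simp only [not_le] at hsplit
  suffices hout : ∑ i ∈ univ.filter (fun i => t < |x i - c|), w i ≤ W / 2 by linarith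
  rcases hV.eq_or_lt with hV0 | hVpos
  · have ht : t = 0 := by simp [t, ← hV0]
    rw [ht, sum_filter_abs_sub_pos_eq_zero_of_sum_mul_sq_eq_zero hw hV0.symm]
    positivity
  · have hcheb : (∑ i ∈ univ.filter (fun i => t < |x i - c|), w i) * (2 / W * V) ≤ V := by
      have ht2 : t ^ 2 = 2 / W * V := by rw [Real.sq_sqrt (by positivity)]; ring
      rw [← ht2]
      exact sum_filter_lt_abs_sub_mul_sq_le hw c (Real.sqrt_nonneg _)
    rw [← mul_assoc, mul_le_iff_le_one_left hVpos, ← mul_div_assoc, div_le_one hW] at hcheb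
    linarith

end WeightedChebyshev

theorem exp_neg_mul_mul_sum_mul_exp_le_sum {ι : Type*} {p z : ι → ℝ} (hp : ∀ i, 0 ≤ p i)
    {l : ℝ} (hl : 0 ≤ l) {s : Finset ι} {b : ℝ} (hs : ∀ i ∈ s, z i ≤ b) :
    Real.exp (-(l * b)) * ∑ i ∈ s, p i * Real.exp (l * z i) ≤ ∑ i ∈ s, p i := by
  rw [mul_sum]
  refine sum_le_sum fun i hi => ?_
  calc Real.exp (-(l * b)) * (p i * Real.exp (l * z i))
      = p i * Real.exp (l * z i - l * b) := by rw [Real.exp_sub, Real.exp_neg]; ring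
    _ ≤ p i * 1 := mul_le_mul_of_nonneg_left (Real.exp_le_one_iff.mpr
        (sub_nonpos.mpr (mul_le_mul_of_nonneg_left (hs i hi) hl))) (hp i)
    _ = p i := mul_one _

section Tilt

variable {n : ℕ} {p z : Fin n → ℝ}

theorem mgf'_pos (hp : ∀ i, 0 ≤ p i) (hsum : 0 < ∑ i, p i) (l : ℝ) : 0 < mgf' n p z l := by
  obtain ⟨i, -, hi⟩ := exists_lt_of_sum_lt (s := univ) (f := 0) (g := p) (by simpa using hsum)
  exact sum_pos' (fun j _ => mul_nonneg (hp j) (Real.exp_pos _).le)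
    ⟨i, mem_univ i, mul_pos hi (Real.exp_pos _)⟩

theorem mgf'_div_two_le_sum_filter_abs_sub_tiltMean_le (hp : ∀ i, 0 ≤ p i)
    (hsum : 0 < ∑ i, p i) (l : ℝ) :
    mgf' n p z l / 2 ≤ ∑ i ∈ univ.filter (fun i =>
      |z i - tiltMean n p z l| ≤ √(2 * tiltVar n p z l)), p i * Real.exp (l * z i) :=
  sum_div_two_le_sum_filter_abs_sub_le (fun i => mul_nonneg (hp i) (Real.exp_pos _).le)
    (mgf'_pos hp hsum l) _

end Tilt

/-- Reverse Chernoff bound: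
`ln P(Z ≥ E[Z_{λZ}] − √(2 Var[Z_{λZ}])) ≥ ln E[e^{λZ}] − λ E[Z_{λZ}] − ln 2 − λ √(2 Var[Z_{λZ}])`. -/
theorem chernoff_lower (n : ℕ) (p z : Fin n → ℝ) (hp : ∀ i, 0 ≤ p i)
    (hsum : ∑ i, p i = 1) (l : ℝ) (hl : 0 ≤ l) :
    Real.log (∑ i ∈ Finset.univ.filter
        (fun i => tiltMean n p z l - Real.sqrt (2 * tiltVar n p z l) ≤ z i), p i)
      ≥ Real.log (mgf' n p z l) - l * tiltMean n p z l - Real.log 2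
        - l * Real.sqrt (2 * tiltVar n p z l) := by
  set μ := tiltMean n p z l
  set t := √(2 * tiltVar n p z l)
  have hsum_pos : 0 < ∑ i, p i := hsum ▸ one_pos
  have hM := mgf'_pos hp hsum_pos (z := z) l
  have hwindow : Real.exp (-(l * (μ + t))) * (mgf' n p z l / 2)
      ≤ ∑ i ∈ univ.filter (fun i => |z i - μ| ≤ t), p i :=
    (mul_le_mul_of_nonneg_left (mgf'_div_two_le_sum_filter_abs_sub_tiltMean_le hp hsum_pos l)
      (Real.exp_pos _).le).trans
    (exp_neg_mul_mul_sum_mul_exp_le_sum hp hl fun i hi => by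
      linarith [(abs_le.mp (mem_filter.mp hi).2).2])
  have hsubset : univ.filter (fun i => |z i - μ| ≤ t) ⊆ univ.filter (fun i => μ - t ≤ z i) :=
    monotone_filter_right _ fun i _ hi => by linarith [(abs_le.mp hi).1]
  calc Real.log (mgf' n p z l) - l * μ - Real.log 2 - l * t
      = Real.log (Real.exp (-(l * (μ + t))) * (mgf' n p z l / 2)) := by
        rw [Real.log_mul (Real.exp_ne_zero _) (by positivity), Real.log_exp,
          Real.log_div hM.ne' two_ne_zero]
        ring
    _ ≤ Real.log (∑ i ∈ univ.filter (fun i => μ - t ≤ z i), p i) :=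
        Real.log_le_log (by positivity) (hwindow.trans
          (sum_le_sum_of_subset_of_nonneg hsubset fun i _ _ => hp i))
end

section
/- The two dual characterizations of the bucketing forest information function agree: min over probability vectors (q_0,…,q_b) with Σ_{j=0}^{b} q_j = 1, q_j > 0, and Σ_{j=0}^{b−1} q_j / p_{j*}^λ ≤ 1, of Σ_{j=0}^{b} p_j ln(p_j/q_j), equals max over r ∈ [0,1] of Σ_{j=0}^{b} p_j ln(1 − r + r·[j≠b]/p_{j*}^λ), with the extrema related by q_j = p_j / (1 − r + r·[j≠b]/p_{j*}^λ). -/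
/-- The inner function of the bucketing forest information:
`r ↦ Σ_{j=0}^{b} p_j ln(1 − r + r·[j≠b]/p_{j*}^λ)`, where `[j≠b] = 1` iff `j < b`. -/
noncomputable def bfInner (b : ℕ) (p : Fin (b + 1) → ℝ) (pstar : Fin b → ℝ)
    (l r : ℝ) : ℝ :=
  ∑ j : Fin (b + 1), p j *
    Real.log (1 - r + r * (if h : (j : ℕ) < b then (pstar ⟨j, h⟩ ^ l)⁻¹ else 0))

/-- The `q` obtained from `r` via `q_j = p_j / (1 − r + r·[j≠b]/p_{j*}^λ)`. -/
noncomputable def dualQ (b : ℕ) (p : Fin (b + 1) → ℝ) (pstar : Fin b → ℝ)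
    (l r : ℝ) (j : Fin (b + 1)) : ℝ :=
  p j / (1 - r + r * (if h : (j : ℕ) < b then (pstar ⟨j, h⟩ ^ l)⁻¹ else 0))

/-!
Write `A_r(j) = 1 − r + r c_j` with `c_j = [j ≠ b] / p_{j*}^λ ≥ 0`. For `r ∈ [0, 1)` and feasible
`q`, `Σ q_j A_r(j) = (1 − r) Σ q + r Σ q c ≤ 1`, so `log x ≤ x − 1` applied to `A_r(j) q_j / p_j`
gives weak duality `Σ p_j log A_r(j) ≤ Σ p_j log (p_j / q_j)`.

Strong duality needs an `r` for which `q_j = p_j / A_r(j)` is itself feasible; its primal value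
is then exactly `Σ p_j log A_r(j)`. If `Σ p c ≤ 1`, take `r = 0`. Otherwise the derivative
`Σ p_j (c_j − 1) / A_r(j)` of the dual objective is positive at `0` and, because `c_b = 0`,
negative near `1`; at a zero of it `Σ p / A_r = Σ p c / A_r = 1`, since `(1 − r) Σ p / A_r +
r Σ p c / A_r = Σ p = 1`.
-/

open Finset Real

lemma Real.mul_log_div_le_sub {x y : ℝ} (hx : 0 < x) (hy : 0 < y) :
    x * log (y / x) ≤ y - x :=
  calc x * log (y / x) ≤ x * (y / x - 1) :=
        mul_le_mul_of_nonneg_left (log_le_sub_one_of_pos (div_pos hy hx)) hx.le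
    _ = y - x := by field_simp

section MixWeight

variable {ι : Type*} {p c : ι → ℝ} {r : ℝ}

def mixWeight (c : ι → ℝ) (r : ℝ) (j : ι) : ℝ := 1 - r + r * c j

lemma mixWeight_pos (hc : ∀ j, 0 ≤ c j) (hr : r ∈ Set.Ico (0 : ℝ) 1) (j : ι) :
    0 < mixWeight c r j := by
  unfold mixWeight
  nlinarith [hc j, hr.1, hr.2]

lemma sub_one_div_mixWeight_le (hc : ∀ j, 0 ≤ c j) (hr : r ∈ Set.Ico (0 : ℝ) 1) (j : ι) :
    (c j - 1) / mixWeight c r j ≤ c j := by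
  rw [div_le_iff₀ (mixWeight_pos hc hr j), mixWeight]
  nlinarith [hr.1, hr.2, hc j, mul_nonneg hr.1 (sq_nonneg (c j - 1 / 2))]

variable [Fintype ι]

lemma sum_mul_mixWeight (v : ι → ℝ) :
    ∑ j, v j * mixWeight c r j = (1 - r) * ∑ j, v j + r * ∑ j, v j * c j := by
  simp only [mixWeight, mul_sum, ← sum_add_distrib]
  exact sum_congr rfl fun j _ ↦ by ring

theorem sum_mul_log_mixWeight_le (hp : ∀ j, 0 < p j) (hp1 : ∑ j, p j = 1)
    (hc : ∀ j, 0 ≤ c j) (hr : r ∈ Set.Ico (0 : ℝ) 1) {q : ι → ℝ} (hq : ∀ j, 0 < q j)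
    (hq1 : ∑ j, q j = 1) (hqc : ∑ j, q j * c j ≤ 1) :
    ∑ j, p j * log (mixWeight c r j) ≤ ∑ j, p j * log (p j / q j) := by
  have hA := mixWeight_pos hc hr
  have hmass : ∑ j, q j * mixWeight c r j ≤ 1 := by
    rw [sum_mul_mixWeight, hq1]
    nlinarith [hr.1, hr.2]
  have hsplit : ∀ j, p j * log (mixWeight c r j) =
      p j * log (p j / q j) + p j * log (q j * mixWeight c r j / p j) := by
    intro j
    rw [log_div (hp j).ne' (hq j).ne', log_div (mul_pos (hq j) (hA j)).ne' (hp j).ne',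
      log_mul (hq j).ne' (hA j).ne']
    ring
  calc ∑ j, p j * log (mixWeight c r j)
      = ∑ j, p j * log (p j / q j) + ∑ j, p j * log (q j * mixWeight c r j / p j) := by
        rw [← sum_add_distrib]; exact sum_congr rfl fun j _ ↦ hsplit j
    _ ≤ ∑ j, p j * log (p j / q j) + (∑ j, q j * mixWeight c r j - ∑ j, p j) := by
        rw [← sum_sub_distrib]
        gcongr with j
        exact mul_log_div_le_sub (hp j) (mul_pos (hq j) (hA j))
    _ ≤ ∑ j, p j * log (p j / q j) := by linarith

lemma sum_mul_log_div_div_mixWeight (hp : ∀ j, p j ≠ 0) :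
    ∑ j, p j * log (p j / (p j / mixWeight c r j)) = ∑ j, p j * log (mixWeight c r j) := by
  simp only [div_div_cancel₀ (hp _)]

lemma sum_div_mixWeight_eq_one_of_sum_eq_zero (hp1 : ∑ j, p j = 1) (hc : ∀ j, 0 ≤ c j)
    (hr : r ∈ Set.Ico (0 : ℝ) 1) (h : ∑ j, p j * (c j - 1) / mixWeight c r j = 0) :
    ∑ j, p j / mixWeight c r j = 1 ∧ ∑ j, p j / mixWeight c r j * c j = 1 := by
  have hA := mixWeight_pos hc hr
  have hmix :
      (1 - r) * ∑ j, p j / mixWeight c r j + r * ∑ j, p j / mixWeight c r j * c j = 1 := by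
    rw [← sum_mul_mixWeight, ← hp1]
    exact sum_congr rfl fun j _ ↦ div_mul_cancel₀ _ (hA j).ne'
  have heq : ∑ j, p j / mixWeight c r j * c j = ∑ j, p j / mixWeight c r j := by
    rw [← sub_eq_zero, ← sum_sub_distrib, ← h]
    exact sum_congr rfl fun j _ ↦ by ring
  rw [heq] at hmix ⊢
  constructor <;> linarith

lemma exists_sum_mul_sub_one_div_mixWeight_eq_zero (hp : ∀ j, 0 < p j) (hp1 : ∑ j, p j = 1)
    (hc : ∀ j, 0 ≤ c j) {i₀ : ι} (hi₀ : c i₀ = 0) (hS : 1 < ∑ j, p j * c j) :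
    ∃ r ∈ Set.Ico (0 : ℝ) 1, ∑ j, p j * (c j - 1) / mixWeight c r j = 0 := by
  classical
  set S := ∑ j, p j * c j
  set F : ℝ → ℝ := fun r ↦ ∑ j, p j * (c j - 1) / mixWeight c r j
  have hpi₀ : p i₀ ≤ 1 := hp1 ▸ single_le_sum (fun j _ ↦ (hp j).le) (mem_univ i₀)
  -- at `r₁` the term of `i₀` alone is `-(S + 1)`
  set r₁ := 1 - p i₀ / (S + 1)
  have hr₁ : r₁ ∈ Set.Ico (0 : ℝ) 1 := by
    have : 0 < p i₀ / (S + 1) := div_pos (hp i₀) (by linarith)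
    have : p i₀ / (S + 1) ≤ 1 := (div_le_one (by linarith)).2 (by linarith)
    constructor <;> linarith
  have hsub : Set.Icc 0 r₁ ⊆ Set.Ico (0 : ℝ) 1 := fun x hx ↦ ⟨hx.1, hx.2.trans_lt hr₁.2⟩
  have hF0 : F 0 = S - 1 := by
    simp only [F, S, mixWeight, sub_zero, zero_mul, add_zero, div_one, mul_sub, mul_one,
      sum_sub_distrib, hp1]
  have hFr₁ : F r₁ ≤ -1 := by
    have hi₀term : p i₀ * (c i₀ - 1) / mixWeight c r₁ i₀ = -(S + 1) := by
      have hA : mixWeight c r₁ i₀ = p i₀ / (S + 1) := by simp [mixWeight, hi₀, r₁]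
      have : 0 < p i₀ := hp i₀
      rw [hA, hi₀]
      field_simp
      ring
    have hrest : ∑ j ∈ univ.erase i₀, p j * (c j - 1) / mixWeight c r₁ j ≤ S :=
      calc ∑ j ∈ univ.erase i₀, p j * (c j - 1) / mixWeight c r₁ j
          ≤ ∑ j ∈ univ.erase i₀, p j * c j := sum_le_sum fun j _ ↦ by
            rw [mul_div_assoc]
            exact mul_le_mul_of_nonneg_left (sub_one_div_mixWeight_le hc hr₁ j) (hp j).le
        _ ≤ S := sum_le_sum_of_subset_of_nonneg (erase_subset _ _)
            fun j _ _ ↦ mul_nonneg (hp j).le (hc j)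
    simp only [F, ← add_sum_erase _ _ (mem_univ i₀)]
    linarith
  have hcont : ContinuousOn F (Set.Icc 0 r₁) :=
    continuousOn_finsetSum _ fun j _ ↦ continuousOn_const.div
      (by unfold mixWeight; fun_prop) fun x hx ↦ (mixWeight_pos hc (hsub hx) j).ne'
  obtain ⟨r, hr, hFr⟩ :=
    intermediate_value_Icc' hr₁.1 hcont (show (0 : ℝ) ∈ Set.Icc (F r₁) (F 0) by
      constructor <;> linarith)
  exact ⟨r, hsub hr, hFr⟩

theorem exists_sum_div_mixWeight_eq_one (hp : ∀ j, 0 < p j) (hp1 : ∑ j, p j = 1)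
    (hc : ∀ j, 0 ≤ c j) {i₀ : ι} (hi₀ : c i₀ = 0) :
    ∃ r ∈ Set.Ico (0 : ℝ) 1,
      ∑ j, p j / mixWeight c r j = 1 ∧ ∑ j, p j / mixWeight c r j * c j ≤ 1 := by
  by_cases hS : ∑ j, p j * c j ≤ 1
  · exact ⟨0, ⟨le_rfl, one_pos⟩, by simpa [mixWeight] using hp1, by simpa [mixWeight] using hS⟩
  · obtain ⟨r, hr, h⟩ :=
      exists_sum_mul_sub_one_div_mixWeight_eq_zero hp hp1 hc hi₀ (not_le.1 hS)
    obtain ⟨h1, hc1⟩ := sum_div_mixWeight_eq_one_of_sum_eq_zero hp1 hc hr h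
    exact ⟨r, hr, h1, hc1.le⟩

end MixWeight

section Bucketing

variable {b : ℕ} {pstar : Fin b → ℝ} {l : ℝ}

/-- `c_j = [j ≠ b] / p_{j*}^λ`; `bfInner` and `dualQ` unfold to expressions in
`mixWeight (bfWeight b pstar l)`. -/
noncomputable def bfWeight (b : ℕ) (pstar : Fin b → ℝ) (l : ℝ) (j : Fin (b + 1)) : ℝ :=
  if h : (j : ℕ) < b then (pstar ⟨j, h⟩ ^ l)⁻¹ else 0

lemma bfWeight_nonneg (hps : ∀ j, 0 < pstar j) (j : Fin (b + 1)) : 0 ≤ bfWeight b pstar l j := by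
  unfold bfWeight
  split_ifs
  exacts [(inv_pos.2 (rpow_pos_of_pos (hps _) l)).le, le_rfl]

lemma bfWeight_last : bfWeight b pstar l (Fin.last b) = 0 := by
  simp [bfWeight]

lemma sum_mul_bfWeight (v : Fin (b + 1) → ℝ) :
    ∑ j, v j * bfWeight b pstar l j = ∑ j : Fin b, v j.castSucc / pstar j ^ l := by
  simp [Fin.sum_univ_castSucc, bfWeight, div_eq_mul_inv]

end Bucketing

theorem bfInfo_duality_general (b : ℕ) (p : Fin (b + 1) → ℝ)
    (pstar : Fin b → ℝ) (hp : ∀ j, 0 < p j) (hsum : ∑ j, p j = 1)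
    (hps : ∀ j, pstar j ∈ Set.Ioo (0 : ℝ) 1) (l : ℝ) :
    ∃ r ∈ Set.Ico (0 : ℝ) 1,
      (∀ r' ∈ Set.Ico (0 : ℝ) 1, bfInner b p pstar l r' ≤ bfInner b p pstar l r) ∧
      (∀ j, 0 < dualQ b p pstar l r j) ∧
      (∑ j, dualQ b p pstar l r j) = 1 ∧
      (∑ j : Fin b, dualQ b p pstar l r j.castSucc / pstar j ^ l) ≤ 1 ∧
      (∑ j, p j * Real.log (p j / dualQ b p pstar l r j)) = bfInner b p pstar l r ∧
      ∀ q : Fin (b + 1) → ℝ, (∀ j, 0 < q j) → (∑ j, q j) = 1 →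
        (∑ j : Fin b, q j.castSucc / pstar j ^ l) ≤ 1 →
        bfInner b p pstar l r ≤ ∑ j, p j * Real.log (p j / q j) := by
  have hc : ∀ j, 0 ≤ bfWeight b pstar l j := bfWeight_nonneg fun j ↦ (hps j).1
  have weak : ∀ r ∈ Set.Ico (0 : ℝ) 1, ∀ q : Fin (b + 1) → ℝ, (∀ j, 0 < q j) →
      ∑ j, q j = 1 → ∑ j : Fin b, q j.castSucc / pstar j ^ l ≤ 1 →
      bfInner b p pstar l r ≤ ∑ j, p j * log (p j / q j) := fun r hr q hq hq1 hqc ↦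
    sum_mul_log_mixWeight_le hp hsum hc hr hq hq1 (by rwa [sum_mul_bfWeight])
  obtain ⟨r, hr, hq1, hqc⟩ := exists_sum_div_mixWeight_eq_one hp hsum hc bfWeight_last
  have hqpos : ∀ j, 0 < dualQ b p pstar l r j := fun j ↦ div_pos (hp j) (mixWeight_pos hc hr j)
  have hqc' : ∑ j : Fin b, dualQ b p pstar l r j.castSucc / pstar j ^ l ≤ 1 := by
    rwa [← sum_mul_bfWeight]
  have hobj : ∑ j, p j * log (p j / dualQ b p pstar l r j) = bfInner b p pstar l r :=
    sum_mul_log_div_div_mixWeight fun j ↦ (hp j).ne'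
  exact ⟨r, hr, fun r' hr' ↦ hobj ▸ weak r' hr' _ hqpos hq1 hqc', hqpos, hq1, hqc', hobj, weak r hr⟩

/-- Duality for the bucketing forest information: the minimum of
`Σ_j p_j ln(p_j/q_j)` over feasible probability vectors `q` equals the maximum
over `r` of `Σ_j p_j ln(1 − r + r·[j≠b]/p_{j*}^λ)`, with the two extrema
related by `q_j = p_j / (1 − r + r·[j≠b]/p_{j*}^λ)`. -/
theorem bfInfo_duality (b : ℕ) (hb : 1 ≤ b) (p : Fin (b + 1) → ℝ)
    (pstar : Fin b → ℝ) (hp : ∀ j, 0 < p j) (hsum : ∑ j, p j = 1)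
    (hps : ∀ j, pstar j ∈ Set.Ioo (0 : ℝ) 1) (l : ℝ) (hl : 0 ≤ l) :
    ∃ r ∈ Set.Ico (0 : ℝ) 1,
      (∀ r' ∈ Set.Ico (0 : ℝ) 1, bfInner b p pstar l r' ≤ bfInner b p pstar l r) ∧
      (∀ j, 0 < dualQ b p pstar l r j) ∧
      (∑ j, dualQ b p pstar l r j) = 1 ∧
      (∑ j : Fin b, dualQ b p pstar l r j.castSucc / pstar j ^ l) ≤ 1 ∧
      (∑ j, p j * Real.log (p j / dualQ b p pstar l r j)) = bfInner b p pstar l r ∧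
      ∀ q : Fin (b + 1) → ℝ, (∀ j, 0 < q j) → (∑ j, q j) = 1 →
        (∑ j : Fin b, q j.castSucc / pstar j ^ l) ≤ 1 →
        bfInner b p pstar l r ≤ ∑ j, p j * Real.log (p j / q j) :=
  bfInfo_duality_general b p pstar hp hsum hps l
end

section
/- Assume the independent data model with coordinates i = 1,…,d, diagonal probabilities p_{i,j} ≥ 0 (j = 0,…,b−1) and marginals p_{i,j*} ∈ (0,1). The success probability P of any nonempty bucketing tree all of whose leaves have probability at most 1/N satisfies P ≤ N^{−λ} · Π_{i=1}^{d} max(1, Σ_{j=0}^{b−1} p_{i,j} / p_{i,j*}^λ) for every λ ≥ 0. -/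
/-- A bucketing tree: either a leaf (compare all pairs in the bucket), or pick a
coordinate and split the data into `b` parts according to its value. -/
inductive BTree (b d : ℕ) : Type where
  | leaf : BTree b d
  | node (i : Fin d) (c : Fin b → BTree b d) : BTree b d

/-- Success probability of a bucketing tree: a node on coordinate `i` succeeds
with the special pair agreeing with value `j` (probability `p i j`) and the
corresponding subtree succeeding. -/
noncomputable def succProb {b d : ℕ} (p : Fin d → Fin b → ℝ) : BTree b d → ℝ
  | .leaf => 1
  | .node i c => ∑ j, p i j * succProb p (c j)

/-- All leaves of the tree have (marginal) probability at most `1/N`, where `q`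
is the probability accumulated so far along the path. -/
def smallLeaves {b d : ℕ} (pstar : Fin d → Fin b → ℝ) (N : ℝ) : ℝ → BTree b d → Prop
  | q, .leaf => q ≤ 1 / N
  | q, .node i c => ∀ j, smallLeaves pstar N (q * pstar i j) (c j)

/-- Each coordinate is split at most once along any root-to-leaf path. -/
def validOn {b d : ℕ} : Finset (Fin d) → BTree b d → Prop
  | _, .leaf => True
  | S, .node i c => i ∈ S ∧ ∀ j, validOn (S.erase i) (c j)


/-! Induct on the tree with the invariant
`succProb p t ≤ (N q)^{-λ} ∏_{i ∈ S} max(1, Σ_j p_{i,j} / p_{i,j*}^λ)`, where `q` is the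
probability of the path to `t` and `S` the set of coordinates still available.
At a leaf `N q ≤ 1`, so the right side is at least `1`. At a split on `i`, the
children contribute `(N q p_{i,j*})^{-λ} = (N q)^{-λ} p_{i,j*}^{-λ}`, and summing the
factors `p_{i,j} p_{i,j*}^{-λ}` produces the factor of `i`, bounded by its `max` with `1`. -/

open Finset

section BucketingTree

variable {b d : ℕ} (p pstar : Fin d → Fin b → ℝ) (l : ℝ)

noncomputable def splitFactor (i : Fin d) : ℝ := max 1 (∑ j, p i j / pstar i j ^ l)

theorem one_le_prod_splitFactor (S : Finset (Fin d)) :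
    1 ≤ ∏ i ∈ S, splitFactor p pstar l i :=
  one_le_prod fun _ _ => le_max_left _ _

variable {p pstar l}

theorem sum_mul_rpow_neg_le_splitFactor {i : Fin d} (hps : ∀ j, 0 ≤ pstar i j) {x C : ℝ}
    (hx : 0 ≤ x) (hC : 0 ≤ C) :
    ∑ j, p i j * ((x * pstar i j) ^ (-l) * C) ≤ x ^ (-l) * (splitFactor p pstar l i * C) := by
  have hterm : ∀ j, p i j * ((x * pstar i j) ^ (-l) * C) =
      x ^ (-l) * (p i j / pstar i j ^ l * C) := fun j => by
    rw [Real.mul_rpow hx (hps j), Real.rpow_neg (hps j), div_eq_mul_inv]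
    ring
  calc ∑ j, p i j * ((x * pstar i j) ^ (-l) * C)
      = x ^ (-l) * ((∑ j, p i j / pstar i j ^ l) * C) := by
        rw [sum_congr rfl fun j _ => hterm j, ← mul_sum, ← sum_mul]
    _ ≤ x ^ (-l) * (splitFactor p pstar l i * C) := by
        gcongr
        exact le_max_right _ _

theorem succProb_le_of_validOn (hp : ∀ i j, 0 ≤ p i j) (hps : ∀ i j, 0 < pstar i j)
    {N : ℝ} (hN : 0 < N) (hl : 0 ≤ l) (t : BTree b d) :
    ∀ (S : Finset (Fin d)) (q : ℝ), 0 < q → validOn S t → smallLeaves pstar N q t →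
      succProb p t ≤ (N * q) ^ (-l) * ∏ i ∈ S, splitFactor p pstar l i := by
  induction t with
  | leaf =>
    intro S q hq _ hleaf
    have hNq : N * q ≤ 1 := by
      rw [smallLeaves, le_div_iff₀ hN] at hleaf
      linarith
    calc succProb p .leaf = 1 * 1 := (mul_one 1).symm
      _ ≤ (N * q) ^ (-l) * ∏ i ∈ S, splitFactor p pstar l i :=
        mul_le_mul (Real.one_le_rpow_of_pos_of_le_one_of_nonpos (by positivity) hNq (by linarith))
          (one_le_prod_splitFactor p pstar l S) zero_le_one (by positivity)
  | node i c ih =>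
    rintro S q hq ⟨hiS, hvalid⟩ hsmall
    have hchild : ∀ j, succProb p (c j) ≤
        (N * q * pstar i j) ^ (-l) * ∏ k ∈ S.erase i, splitFactor p pstar l k := fun j => by
      simpa only [mul_assoc] using
        ih j (S.erase i) (q * pstar i j) (mul_pos hq (hps i j)) (hvalid j) (hsmall j)
    calc succProb p (.node i c) = ∑ j, p i j * succProb p (c j) := rfl
      _ ≤ ∑ j, p i j * ((N * q * pstar i j) ^ (-l) *
            ∏ k ∈ S.erase i, splitFactor p pstar l k) :=
        sum_le_sum fun j _ => mul_le_mul_of_nonneg_left (hchild j) (hp i j)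
      _ ≤ (N * q) ^ (-l) *
            (splitFactor p pstar l i * ∏ k ∈ S.erase i, splitFactor p pstar l k) :=
        sum_mul_rpow_neg_le_splitFactor (fun j => (hps i j).le) (by positivity)
          (zero_le_one.trans (one_le_prod_splitFactor p pstar l _))
      _ = (N * q) ^ (-l) * ∏ k ∈ S, splitFactor p pstar l k := by
        rw [mul_prod_erase _ _ hiS]

end BucketingTree

/-- The success probability of any nonempty bucketing tree all of whose leaves
have probability at most `1/N` is at most
`N^{−λ} Π_i max(1, Σ_j p_{i,j}/p_{i,j*}^λ)` for every `λ ≥ 0`. -/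
theorem bucketing_tree_upper {b d : ℕ} (p pstar : Fin d → Fin b → ℝ)
    (hp : ∀ i j, 0 ≤ p i j) (hps : ∀ i j, pstar i j ∈ Set.Ioo (0 : ℝ) 1)
    (N : ℝ) (hN : 0 < N) (t : BTree b d)
    (hvalid : validOn Finset.univ t) (hsmall : smallLeaves pstar N 1 t)
    (l : ℝ) (hl : 0 ≤ l) :
    succProb p t ≤ N ^ (-l) * ∏ i, max 1 (∑ j, p i j / pstar i j ^ l) := by
  simpa only [mul_one, splitFactor] using
    succProb_le_of_validOn hp (fun i j => (hps i j).1) hN hl t univ 1 one_pos hvalid hsmall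
end

section
/- Assume the independent data model. If a bucketing forest contains T trees, has success probability S > 0, and all leaves have probability at most 1/N, then for every λ ≥ 0: ln T ≥ λ ln N + ln(S/2) − √((4/S) Σ_{i=1}^{d} V(P_i, λ)) − Σ_{i=1}^{d} F(P_i, λ), where F(P_i, λ) = Σ_{j=0}^{b} p_{i,j} ln(p_{i,j}/q_{i,j}) for the minimizing q's in the definition of the bucketing forest information, and V(P_i, λ) = Σ_{j=0}^{b} p_{i,j}(ln(p_{i,j}/q_{i,j}) − Σ_k p_{i,k} ln(p_{i,k}/q_{i,k}))². -/
/-- Whether a tree succeeds on the abbreviated special-pair state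
`y ∈ {0,…,b}^d` (`y i = b` means disagreement at coordinate `i`). -/
def treeHits {b d : ℕ} : BTree b d → (Fin d → Fin (b + 1)) → Bool
  | .leaf, _ => true
  | .node i c, y => if h : (y i : ℕ) < b then treeHits (c ⟨y i, h⟩) y else false

/-!
Change of measure from `P = ∏ᵢ pᵢ` to `Q = ∏ᵢ qᵢ`. Under `Q` a valid tree hits with probability
exactly `treeHitProb q t`, and the feasibility constraint on `q` bounds this by `N^{-λ}` once all
leaves have `P*`-mass at most `1/N`; so the forest hits with `Q`-probability at most `T N^{-λ}`.
Under `P` the log-likelihood ratio `L = Σᵢ ln (pᵢ/qᵢ)` has mean `Σ F` and variance `Σ V`, so by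
Chebyshev `L ≤ Σ F + √((4/S) Σ V)` off a set of `P`-mass at most `S/4`. On the rest of the success
event, of `P`-mass at least `S/2`, we have `Q ≥ e^{-L} P`, and comparing the two bounds on the
`Q`-probability of success gives the claim after taking logarithms.
-/

open Finset

section ProductWeights

variable {ι α : Type*} [Fintype ι] [DecidableEq ι] [Fintype α]

theorem sum_prod_mul_prod (p g : ι → α → ℝ) :
    ∑ y : ι → α, (∏ i, p i (y i)) * ∏ i, g i (y i) = ∏ i, ∑ j, p i j * g i j := by
  simp_rw [← prod_mul_distrib]
  exact (Fintype.prod_sum fun i j => p i j * g i j).symm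

variable {p : ι → α → ℝ}

theorem sum_prod_mul_apply (hp : ∀ i, ∑ j, p i j = 1) (i : ι) (f : α → ℝ) :
    ∑ y : ι → α, (∏ m, p m (y m)) * f (y i) = ∑ j, p i j * f j := by
  have h := sum_prod_mul_prod p fun m v => if m = i then f v else 1
  simp only [Fintype.prod_ite_eq'] at h
  rw [h, Fintype.prod_eq_single i fun m hm => by simp [hm, hp m]]
  simp

theorem sum_prod_mul_apply_mul_apply_of_ne {i k : ι} (hik : i ≠ k)
    {f g : α → ℝ} (hf : ∑ j, p i j * f j = 0) :
    ∑ y : ι → α, (∏ m, p m (y m)) * (f (y i) * g (y k)) = 0 := by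
  have h := sum_prod_mul_prod p fun m v => (if m = i then f v else 1) * (if m = k then g v else 1)
  simp only [prod_mul_distrib, Fintype.prod_ite_eq'] at h
  rw [h]
  exact prod_eq_zero (mem_univ i) (by simpa [hik] using hf)

theorem sum_prod_mul_sum_sq_of_centered (hp : ∀ i, ∑ j, p i j = 1) {c : ι → α → ℝ}
    (hc : ∀ i, ∑ j, p i j * c i j = 0) :
    ∑ y : ι → α, (∏ m, p m (y m)) * (∑ i, c i (y i)) ^ 2 = ∑ i, ∑ j, p i j * c i j ^ 2 := by
  simp_rw [sq, sum_mul_sum, mul_sum]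
  rw [sum_comm]
  refine sum_congr rfl fun i _ => ?_
  rw [sum_comm, sum_eq_single i (fun k _ hki => sum_prod_mul_apply_mul_apply_of_ne
    (Ne.symm hki) (hc i)) (by simp)]
  exact sum_prod_mul_apply hp i fun j => c i j * c i j

theorem sum_prod_mul_sum_sub_sq (hp : ∀ i, ∑ j, p i j = 1) (a : ι → α → ℝ) :
    ∑ y : ι → α, (∏ m, p m (y m)) * (∑ i, a i (y i) - ∑ i, ∑ j, p i j * a i j) ^ 2
      = ∑ i, ∑ j, p i j * (a i j - ∑ k, p i k * a i k) ^ 2 := by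
  have hc : ∀ i, ∑ j, p i j * (a i j - ∑ k, p i k * a i k) = 0 := fun i => by
    simp only [mul_sub, sum_sub_distrib, ← sum_mul, hp i, one_mul, sub_self]
  rw [← sum_prod_mul_sum_sq_of_centered hp hc]
  simp only [sum_sub_distrib]

end ProductWeights

section FiniteWeights

variable {Ω : Type*} [Fintype Ω] {P : Ω → ℝ}

theorem sum_tail_le_of_second_moment (hP : ∀ y, 0 ≤ P y) (X : Ω → ℝ) (m : ℝ) {κ : ℝ}
    (hκ : 0 < κ) :
    ∑ y with m + √((∑ z, P z * (X z - m) ^ 2) / κ) < X y, P y ≤ κ := by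
  set V := ∑ z, P z * (X z - m) ^ 2
  have hterm : ∀ z, 0 ≤ P z * (X z - m) ^ 2 := fun z => mul_nonneg (hP z) (sq_nonneg _)
  have hV : 0 ≤ V := sum_nonneg fun z _ => hterm z
  have hmarkov : (∑ y with m + √(V / κ) < X y, P y) * (V / κ) ≤ V := by
    rw [sum_mul]
    calc ∑ y with m + √(V / κ) < X y, P y * (V / κ)
        ≤ ∑ y with m + √(V / κ) < X y, P y * (X y - m) ^ 2 := by
          refine sum_le_sum fun y hy => mul_le_mul_of_nonneg_left ?_ (hP y)
          rw [← Real.sq_sqrt (div_nonneg hV hκ.le)]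
          have := (mem_filter.mp hy).2
          exact pow_le_pow_left₀ (Real.sqrt_nonneg _) (by linarith) 2
      _ ≤ V := sum_le_sum_of_subset_of_nonneg (filter_subset _ _) fun z _ _ => hterm z
  rcases hV.eq_or_lt with hV0 | hVpos
  · have hzero : ∀ y, P y * (X y - m) ^ 2 = 0 :=
      fun y => (sum_eq_zero_iff_of_nonneg fun z _ => hterm z).mp hV0.symm y (mem_univ y)
    rw [sum_eq_zero fun y hy => ?_]
    · exact hκ.le
    have hgap : 0 < X y - m := by
      have := (mem_filter.mp hy).2
      rw [← hV0, zero_div, Real.sqrt_zero, add_zero] at this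
      linarith
    simpa [hgap.ne'] using hzero y
  · rw [mul_div_assoc'] at hmarkov
    have := (div_le_iff₀ hκ).mp hmarkov
    nlinarith

theorem exp_neg_mul_sub_sum_tail_le {Q L : Ω → ℝ} (hP : ∀ y, 0 ≤ P y)
    (hPQ : ∀ y, P y * Real.exp (-L y) ≤ Q y) (A : Ω → Prop) [DecidablePred A] (c : ℝ) :
    Real.exp (-c) * (∑ y, P y * (if A y then 1 else 0) - ∑ y with c < L y, P y)
      ≤ ∑ y, Q y * (if A y then 1 else 0) := by
  rw [sum_filter, ← sum_sub_distrib, mul_sum]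
  refine sum_le_sum fun y _ => ?_
  have hQ : 0 ≤ Q y := (mul_nonneg (hP y) (Real.exp_pos _).le).trans (hPQ y)
  split_ifs with hA hcL hcL
  · simpa using hQ
  · calc Real.exp (-c) * (P y * 1 - 0) = P y * Real.exp (-c) := by ring
      _ ≤ P y * Real.exp (-L y) :=
          mul_le_mul_of_nonneg_left (Real.exp_le_exp.mpr (by linarith)) (hP y)
      _ ≤ Q y * 1 := by simpa using hPQ y
  · nlinarith [hP y, Real.exp_pos (-c)]
  · simp

theorem sum_mul_ite_exists_le {κ : Type*} [Fintype κ] (hP : ∀ y, 0 ≤ P y) (H : κ → Ω → Prop)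
    [∀ t, DecidablePred (H t)] [DecidablePred fun y => ∃ t, H t y] :
    ∑ y, P y * (if ∃ t, H t y then 1 else 0) ≤ ∑ t, ∑ y, P y * (if H t y then 1 else 0) := by
  rw [sum_comm]
  refine sum_le_sum fun y _ => ?_
  rw [← mul_sum]
  refine mul_le_mul_of_nonneg_left ?_ (hP y)
  split_ifs with h
  · obtain ⟨t, ht⟩ := h
    calc (1 : ℝ) = if H t y then 1 else 0 := (if_pos ht).symm
      _ ≤ _ := single_le_sum (f := fun t => if H t y then (1 : ℝ) else 0)
          (fun _ _ => by positivity) (mem_univ t)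
  · exact sum_nonneg fun _ _ => by positivity

end FiniteWeights

theorem prod_mul_exp_neg_sum_log_div_le {ι : Type*} (s : Finset ι) {a b : ι → ℝ}
    (ha : ∀ i, 0 ≤ a i) (hb : ∀ i, 0 < b i) :
    (∏ i ∈ s, a i) * Real.exp (-∑ i ∈ s, Real.log (a i / b i)) ≤ ∏ i ∈ s, b i := by
  rw [← sum_neg_distrib, Real.exp_sum, ← prod_mul_distrib]
  refine prod_le_prod (fun i _ => mul_nonneg (ha i) (Real.exp_pos _).le) fun i _ => ?_
  rcases (ha i).eq_or_lt with h0 | hpos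
  · rw [← h0, zero_mul]; exact (hb i).le
  · rw [Real.exp_neg, Real.exp_log (div_pos hpos (hb i)), inv_div, mul_div_cancel₀ _ hpos.ne']

section BucketingTree

variable {b d : ℕ}

def treeHitProb (q : Fin d → Fin (b + 1) → ℝ) : BTree b d → ℝ
  | .leaf => 1
  | .node i c => ∑ j, q i j.castSucc * treeHitProb q (c j)

theorem treeHits_node_of_eq_castSucc {i : Fin d} {c : Fin b → BTree b d}
    {y : Fin d → Fin (b + 1)} {j : Fin b} (hy : y i = j.castSucc) :
    treeHits (.node i c) y = treeHits (c j) y := by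
  simp [treeHits, hy]

theorem treeHits_node_of_eq_last {i : Fin d} {c : Fin b → BTree b d}
    {y : Fin d → Fin (b + 1)} (hy : y i = Fin.last b) :
    treeHits (.node i c) y = false := by
  simp [treeHits, hy]

/-- Arbitrary weights off `E` let the induction absorb the branch condition `y i = j` into them. -/
theorem sum_prod_mul_treeHits {q : Fin d → Fin (b + 1) → ℝ} (hq : ∀ i, ∑ j, q i j = 1)
    {t : BTree b d} {E : Finset (Fin d)} (ht : validOn E t) {w : Fin d → Fin (b + 1) → ℝ}
    (hw : ∀ i ∈ E, w i = q i) :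
    ∑ y, (∏ i, w i (y i)) * (if treeHits t y then 1 else 0)
      = treeHitProb q t * ∏ i, ∑ j, w i j := by
  induction t generalizing E w with
  | leaf => simp [treeHits, treeHitProb, Fintype.prod_sum]
  | node i c ih =>
    obtain ⟨hiE, hc⟩ := ht
    -- `w' j` restricts the weights at coordinate `i` to the branch `j`
    set w' : Fin b → Fin d → Fin (b + 1) → ℝ :=
      fun j m v => if m = i ∧ v ≠ j.castSucc then 0 else w m v
    have hw' : ∀ j, ∀ m ∈ E.erase i, w' j m = w m := fun j m hm => by
      funext v; simp [w', (mem_erase.mp hm).1]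
    have hsplit : ∀ y : Fin d → Fin (b + 1),
        (∏ m, w m (y m)) * (if treeHits (.node i c) y then 1 else 0)
          = ∑ j, (∏ m, w' j m (y m)) * (if treeHits (c j) y then 1 else 0) := by
      intro y
      have hon : ∀ j, y i = j.castSucc → ∏ m, w' j m (y m) = ∏ m, w m (y m) := fun j hj =>
        prod_congr rfl fun m _ => by by_cases hm : m = i <;> simp [w', hm, hj]
      have hoff : ∀ j, y i ≠ j.castSucc → ∏ m, w' j m (y m) = 0 := fun j hj =>
        prod_eq_zero (mem_univ i) (by simp [w', hj])
      rcases Fin.eq_castSucc_or_eq_last (y i) with ⟨j₀, hj₀⟩ | hlast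
      · rw [treeHits_node_of_eq_castSucc hj₀, sum_eq_single j₀, hon j₀ hj₀]
        · exact fun j _ hj => by
            rw [hoff j (hj₀ ▸ (Fin.castSucc_injective b).ne hj.symm), zero_mul]
        · simp
      · rw [treeHits_node_of_eq_last hlast]
        simp [hoff _ (hlast ▸ (Fin.castSucc_ne_last _).symm)]
    have hbranch : ∀ j, ∏ m, ∑ v, w' j m v = q i j.castSucc * ∏ m, ∑ v, w m v := by
      intro j
      rw [Fintype.prod_eq_mul_prod_compl i, Fintype.prod_eq_mul_prod_compl i (fun m => ∑ v, w m v),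
        hw i hiE, hq i, one_mul]
      congr 1
      · simp [w', hw i hiE]
      · refine prod_congr rfl fun m hm => sum_congr rfl fun v _ => ?_
        have hmi : m ≠ i := by simpa using hm
        simp [w', hmi]
    simp_rw [hsplit]
    rw [sum_comm]
    simp_rw [ih _ (hc _) (fun m hm => (hw' _ m hm).trans (hw m (mem_of_mem_erase hm))), hbranch]
    simp only [treeHitProb, sum_mul]
    exact sum_congr rfl fun j _ => by ring

theorem treeHitProb_le {q : Fin d → Fin (b + 1) → ℝ} {pstar : Fin d → Fin b → ℝ} {N l : ℝ}
    (hq : ∀ i j, 0 ≤ q i j) (hps : ∀ i j, 0 < pstar i j) (hN : 0 < N) (hl : 0 ≤ l)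
    (hqfeas : ∀ i, ∑ j : Fin b, q i j.castSucc / pstar i j ^ l ≤ 1)
    {t : BTree b d} {w : ℝ} (hw : 0 < w) (ht : smallLeaves pstar N w t) :
    treeHitProb q t ≤ (w * N) ^ (-l) := by
  induction t generalizing w with
  | leaf =>
    have hwN : w * N ≤ 1 := by
      have : w ≤ 1 / N := ht
      rwa [le_div_iff₀ hN] at this
    exact Real.one_le_rpow_of_pos_of_le_one_of_nonpos (by positivity) hwN (neg_nonpos.mpr hl)
  | node i c ih =>
    calc ∑ j, q i j.castSucc * treeHitProb q (c j)
        ≤ ∑ j, q i j.castSucc * (w * pstar i j * N) ^ (-l) :=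
          sum_le_sum fun j _ => mul_le_mul_of_nonneg_left
            (ih j (mul_pos hw (hps i j)) (ht j)) (hq i _)
      _ = (w * N) ^ (-l) * ∑ j, q i j.castSucc / pstar i j ^ l := by
          rw [mul_sum]
          refine sum_congr rfl fun j _ => ?_
          rw [mul_right_comm, Real.mul_rpow (by positivity) (hps i j).le,
            Real.rpow_neg (hps i j).le]
          ring
      _ ≤ (w * N) ^ (-l) := mul_le_of_le_one_right (by positivity) (hqfeas i)

theorem sum_prod_mul_forestHits_le {T : ℕ} {q : Fin d → Fin (b + 1) → ℝ}
    {pstar : Fin d → Fin b → ℝ} {N l : ℝ} (hq : ∀ i j, 0 ≤ q i j) (hqsum : ∀ i, ∑ j, q i j = 1)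
    (hps : ∀ i j, 0 < pstar i j) (hN : 0 < N) (hl : 0 ≤ l)
    (hqfeas : ∀ i, ∑ j : Fin b, q i j.castSucc / pstar i j ^ l ≤ 1) (trees : Fin T → BTree b d)
    (hvalid : ∀ t, validOn Finset.univ (trees t)) (hsmall : ∀ t, smallLeaves pstar N 1 (trees t)) :
    ∑ y, (∏ i, q i (y i)) * (if ∃ t, treeHits (trees t) y then 1 else 0) ≤ T * N ^ (-l) := by
  calc _ ≤ ∑ t, ∑ y, (∏ i, q i (y i)) * (if treeHits (trees t) y then 1 else 0) :=
        sum_mul_ite_exists_le (fun y => prod_nonneg fun i _ => hq i _) _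
    _ = ∑ t, treeHitProb q (trees t) := sum_congr rfl fun t _ => by
        rw [sum_prod_mul_treeHits hqsum (hvalid t) fun i _ => rfl]
        simp [hqsum]
    _ ≤ ∑ _t : Fin T, N ^ (-l) := sum_le_sum fun t _ => by
        simpa using treeHitProb_le hq hps hN hl hqfeas one_pos (hsmall t)
    _ = T * N ^ (-l) := by simp

end BucketingTree

theorem bucketing_forest_upper_general {b d T : ℕ}
    (p : Fin d → Fin (b + 1) → ℝ) (pstar : Fin d → Fin b → ℝ)
    (hp : ∀ i j, 0 ≤ p i j) (hpsum : ∀ i, ∑ j, p i j = 1)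
    (hps : ∀ i j, pstar i j ∈ Set.Ioo (0 : ℝ) 1)
    (N : ℝ) (hN : 1 < N) (trees : Fin T → BTree b d)
    (hvalid : ∀ t, validOn Finset.univ (trees t))
    (hsmall : ∀ t, smallLeaves pstar N 1 (trees t))
    (S : ℝ)
    (hSdef : S = ∑ y : Fin d → Fin (b + 1), (∏ i, p i (y i)) *
        (if ∃ t, treeHits (trees t) y then (1 : ℝ) else 0))
    (hS : 0 < S) (l : ℝ) (hl : 0 ≤ l)
    (q : Fin d → Fin (b + 1) → ℝ) (hq : ∀ i j, 0 < q i j)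
    (hqsum : ∀ i, ∑ j, q i j = 1)
    (hqfeas : ∀ i, ∑ j : Fin b, q i j.castSucc / pstar i j ^ l ≤ 1) :
    Real.log T ≥ l * Real.log N + Real.log (S / 2)
      - Real.sqrt ((4 / S) * ∑ i, ∑ j, p i j *
          (Real.log (p i j / q i j) - ∑ k, p i k * Real.log (p i k / q i k)) ^ 2)
      - ∑ i, ∑ j, p i j * Real.log (p i j / q i j) := by
  have hP : ∀ y : Fin d → Fin (b + 1), 0 ≤ ∏ i, p i (y i) := fun y => prod_nonneg fun i _ => hp i _
  have htail := sum_tail_le_of_second_moment hP (fun y => ∑ i, Real.log (p i (y i) / q i (y i)))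
    (∑ i, ∑ j, p i j * Real.log (p i j / q i j)) (div_pos hS four_pos)
  rw [sum_prod_mul_sum_sub_sq hpsum fun i j => Real.log (p i j / q i j),
    show ∀ V : ℝ, V / (S / 4) = 4 / S * V from fun V => by ring] at htail
  set V := ∑ i, ∑ j, p i j *
    (Real.log (p i j / q i j) - ∑ k, p i k * Real.log (p i k / q i k)) ^ 2
  set c := ∑ i, ∑ j, p i j * Real.log (p i j / q i j) + √(4 / S * V)
  have hlower : Real.exp (-c) * (S / 2)
      ≤ ∑ y, (∏ i, q i (y i)) * (if ∃ t, treeHits (trees t) y then 1 else 0) := by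
    refine le_trans ?_ (exp_neg_mul_sub_sum_tail_le hP
      (fun y => prod_mul_exp_neg_sum_log_div_le _ (fun i => hp i _) fun i => hq i _) _ c)
    rw [← hSdef]
    exact mul_le_mul_of_nonneg_left (by linarith) (Real.exp_pos _).le
  have hupper := sum_prod_mul_forestHits_le (fun i j => (hq i j).le) hqsum
    (fun i j => (hps i j).1) (zero_lt_one.trans hN) hl hqfeas trees hvalid hsmall
  have hNl : 0 < N ^ (-l) := Real.rpow_pos_of_pos (zero_lt_one.trans hN) _
  have hT : (0 : ℝ) < T := (mul_pos_iff_of_pos_right hNl).mp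
    ((mul_pos (Real.exp_pos _) (half_pos hS)).trans_le (hlower.trans hupper))
  have hlog := Real.log_le_log (by positivity) (hlower.trans hupper)
  rw [Real.log_mul (Real.exp_pos _).ne' (half_pos hS).ne', Real.log_exp,
    Real.log_mul hT.ne' hNl.ne', Real.log_rpow (zero_lt_one.trans hN)] at hlog
  linarith

/-- If a bucketing forest of `T` trees, all of whose leaves have probability at
most `1/N`, has success probability `S > 0`, then for every `λ ≥ 0` and every
feasible `q` (in particular the minimizing `q` of the bucketing forest
information) we have
`ln T ≥ λ ln N + ln(S/2) − √((4/S) Σ_i V(P_i,λ)) − Σ_i F(P_i,λ)`. -/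
theorem bucketing_forest_upper {b d T : ℕ}
    (p : Fin d → Fin (b + 1) → ℝ) (pstar : Fin d → Fin b → ℝ)
    (hp : ∀ i j, 0 ≤ p i j) (hpsum : ∀ i, ∑ j, p i j = 1)
    (hps : ∀ i j, pstar i j ∈ Set.Ioo (0 : ℝ) 1)
    (hple : ∀ i (j : Fin b), p i j.castSucc ≤ pstar i j)
    (N : ℝ) (hN : 1 < N) (trees : Fin T → BTree b d)
    (hvalid : ∀ t, validOn Finset.univ (trees t))
    (hsmall : ∀ t, smallLeaves pstar N 1 (trees t))
    (S : ℝ)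
    (hSdef : S = ∑ y : Fin d → Fin (b + 1), (∏ i, p i (y i)) *
        (if ∃ t, treeHits (trees t) y then (1 : ℝ) else 0))
    (hS : 0 < S) (l : ℝ) (hl : 0 ≤ l)
    (q : Fin d → Fin (b + 1) → ℝ) (hq : ∀ i j, 0 < q i j)
    (hqsum : ∀ i, ∑ j, q i j = 1)
    (hqfeas : ∀ i, ∑ j : Fin b, q i j.castSucc / pstar i j ^ l ≤ 1) :
    Real.log T ≥ l * Real.log N + Real.log (S / 2)
      - Real.sqrt ((4 / S) * ∑ i, ∑ j, p i j *
          (Real.log (p i j / q i j) - ∑ k, p i k * Real.log (p i k / q i k)) ^ 2)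
      - ∑ i, ∑ j, p i j * Real.log (p i j / q i j) :=
  bucketing_forest_upper_general p pstar hp hpsum hps N hN trees hvalid hsmall S hSdef hS l hl q hq
    hqsum hqfeas
end
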